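/- arXiv:2311.16546 — 4 statements merged into one kernel-verified Lean document; each statement's English description precedes it below -/
import Mathlib

section
/- For any probability measure κ on [0,∞) which is not equal to the Dirac mass δ₀ and whose moments of all orders are finite, there exists a constant a = a(κ) > 0 such that for every pair of integers m, n ∈ ℕ, ∫₀^∞ (r + a)^m (r − a)^n dκ(r) ≥ 0. -/
/-!
Pick `ε > 0` with `p = κ [ε, ∞) > 0`, which exists as `κ` lives on `[0, ∞)` and is not `δ₀`.
For `t ≥ 0` and `0 < a ≤ ε` the integrand `(t + a)^m (t - a)^n` is nonnegative on `[a, ∞)`,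
at least `(ε - a)^(m+n)` on `[ε, ∞)` and at least `-(2a)^(m+n)` on `[0, a)`, so the integral is
at least `p (ε - a)^(m+n) - (2a)^(m+n)`. With `δ = min p 1` and `2a ≤ δ (ε - a)` this is
nonnegative for `m + n ≥ 1`, since then `δ^(m+n) ≤ δ ≤ p`.
-/

open MeasureTheory ProbabilityTheory Set Filter

lemma MeasureTheory.Measure.eq_dirac_of_ae_eq {α : Type*} [MeasurableSpace α] (μ : Measure α)
    [IsProbabilityMeasure μ] {x : α} (h : ∀ᵐ y ∂μ, y = x) : μ = Measure.dirac x := by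
  simpa using (hasLaw_dirac_of_ae_eq (X := id) h).map_eq

lemma exists_lt_measure_Ici_ne_zero {μ : Measure ℝ} {a : ℝ} (h : μ (Ioi a) ≠ 0) :
    ∃ b > a, μ (Ici b) ≠ 0 := by
  contrapose! h
  have hlim : Tendsto (fun n : ℕ => a + 1 / ((n : ℝ) + 1)) atTop (nhds a) := by
    simpa using tendsto_one_div_add_atTop_nhds_zero_nat.const_add a
  have hlt (n : ℕ) : a < a + 1 / ((n : ℝ) + 1) := lt_add_of_pos_right a Nat.one_div_pos_of_nat
  rw [← iUnion_Ici_eq_Ioi_of_lt_of_tendsto hlt hlim]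
  exact measure_iUnion_null fun n => h _ (hlt n)

lemma exists_pos_measure_Ici_ne_zero_of_ne_dirac (κ : Measure ℝ) [IsProbabilityMeasure κ]
    (hsupp : κ (Iio 0) = 0) (hne : κ ≠ Measure.dirac 0) : ∃ ε > 0, κ (Ici ε) ≠ 0 := by
  refine exists_lt_measure_Ici_ne_zero fun hIoi => hne (κ.eq_dirac_of_ae_eq ?_)
  rw [ae_iff, ← measure_union_null hsupp hIoi, Iio_union_Ioi]
  rfl

lemma integrable_polynomial_eval_of_integrable_pow {μ : Measure ℝ}
    (hmom : ∀ k : ℕ, Integrable (fun t : ℝ => t ^ k) μ) (p : Polynomial ℝ) :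
    Integrable (fun t => p.eval t) μ := by
  simp_rw [Polynomial.eval_eq_sum_range]
  exact integrable_finsetSum _ fun i _ => (hmom i).const_mul _

lemma indicator_Ici_sub_le_add_pow_mul_sub_pow {a b t : ℝ} (m n : ℕ) (ha : 0 ≤ a)
    (hab : a ≤ b) (ht : 0 ≤ t) :
    (Ici b).indicator (fun _ => (b - a) ^ (m + n)) t - (2 * a) ^ (m + n)
      ≤ (t + a) ^ m * (t - a) ^ n := by
  rcases le_or_gt b t with hbt | htb
  · rw [indicator_of_mem (mem_Ici.2 hbt), pow_add]
    have : (b - a) ^ m * (b - a) ^ n ≤ (t + a) ^ m * (t - a) ^ n := by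
      gcongr
      linarith
    have : 0 ≤ (2 * a) ^ (m + n) := by positivity
    linarith
  rw [indicator_of_notMem (notMem_Ici.2 htb), zero_sub, neg_le, pow_add]
  rcases le_or_gt a t with hat | hta
  · have : 0 ≤ (t + a) ^ m * (t - a) ^ n := by
      apply mul_nonneg <;> apply pow_nonneg <;> linarith
    have : 0 ≤ (2 * a) ^ m * (2 * a) ^ n := by positivity
    linarith
  · refine (neg_le_abs _).trans ?_
    rw [abs_mul, abs_pow, abs_pow]
    gcongr <;> rw [abs_le] <;> constructor <;> linarith

lemma integrable_add_pow_mul_sub_pow {μ : Measure ℝ}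
    (hmom : ∀ k : ℕ, Integrable (fun t : ℝ => t ^ k) μ) (a : ℝ) (m n : ℕ) :
    Integrable (fun t : ℝ => (t + a) ^ m * (t - a) ^ n) μ := by
  have := integrable_polynomial_eval_of_integrable_pow hmom
    ((Polynomial.X + Polynomial.C a) ^ m * (Polynomial.X - Polynomial.C a) ^ n)
  simpa only [Polynomial.eval_mul, Polynomial.eval_pow, Polynomial.eval_add,
    Polynomial.eval_sub, Polynomial.eval_X, Polynomial.eval_C] using this

lemma integral_add_pow_mul_sub_pow_nonneg {κ : Measure ℝ} [IsProbabilityMeasure κ]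
    (hsupp : κ (Iio 0) = 0) {a b : ℝ} {m n : ℕ}
    (hint : Integrable (fun t : ℝ => (t + a) ^ m * (t - a) ^ n) κ) (ha : 0 ≤ a) (hab : a ≤ b)
    (hdom : (2 * a) ^ (m + n) ≤ κ.real (Ici b) * (b - a) ^ (m + n)) :
    0 ≤ ∫ t, (t + a) ^ m * (t - a) ^ n ∂κ := by
  have hbound : ∀ᵐ t ∂κ, (Ici b).indicator (fun _ => (b - a) ^ (m + n)) t - (2 * a) ^ (m + n)
      ≤ (t + a) ^ m * (t - a) ^ n := by
    filter_upwards [measure_eq_zero_iff_ae_notMem.1 hsupp] with t ht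
    exact indicator_Ici_sub_le_add_pow_mul_sub_pow m n ha hab (not_lt.1 ht)
  have hint_bound : Integrable
      (fun t => (Ici b).indicator (fun _ => (b - a) ^ (m + n)) t - (2 * a) ^ (m + n)) κ :=
    ((integrable_const _).indicator measurableSet_Ici).sub (integrable_const _)
  calc 0 ≤ κ.real (Ici b) * (b - a) ^ (m + n) - (2 * a) ^ (m + n) := by linarith
    _ = ∫ t, ((Ici b).indicator (fun _ => (b - a) ^ (m + n)) t - (2 * a) ^ (m + n)) ∂κ := by
      rw [integral_sub ((integrable_const _).indicator measurableSet_Ici) (integrable_const _),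
        integral_indicator_const _ measurableSet_Ici, integral_const]
      simp
    _ ≤ ∫ t, (t + a) ^ m * (t - a) ^ n ∂κ := integral_mono_ae hint_bound hint hbound

/-- For any Borel probability measure `κ` supported on `[0,∞)`, with
finite moments of all orders and not equal to the Dirac mass at `0`, there exists
`a = a(κ) > 0` such that `∫₀^∞ (r+a)^m (r-a)^n dκ(r) ≥ 0` for all `m, n ∈ ℕ`. -/
theorem wells_condition_of_ne_dirac (κ : Measure ℝ) [IsProbabilityMeasure κ]
    (hsupp : κ (Set.Iio 0) = 0)
    (hmom : ∀ k : ℕ, Integrable (fun t : ℝ => t ^ k) κ)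
    (hne : κ ≠ Measure.dirac 0) :
    ∃ a > (0:ℝ), ∀ m n : ℕ, 0 ≤ ∫ t, (t + a) ^ m * (t - a) ^ n ∂κ := by
  obtain ⟨ε, hε, hκε⟩ := exists_pos_measure_Ici_ne_zero_of_ne_dirac κ hsupp hne
  set δ := min (κ.real (Ici ε)) 1
  have hδ : 0 < δ := lt_min (ENNReal.toReal_pos hκε (measure_ne_top _ _)) one_pos
  refine ⟨δ * ε / 4, by positivity, fun m n => ?_⟩
  rcases (m + n).eq_zero_or_pos with hmn | hmn
  · obtain ⟨rfl, rfl⟩ : m = 0 ∧ n = 0 := by omega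
    simp
  have hδ_le_one : δ ≤ 1 := min_le_right _ _
  refine integral_add_pow_mul_sub_pow_nonneg hsupp (integrable_add_pow_mul_sub_pow hmom _ m n)
    (b := ε) (by positivity) (by nlinarith) ?_
  calc (2 * (δ * ε / 4)) ^ (m + n) ≤ (δ * (ε - δ * ε / 4)) ^ (m + n) :=
        pow_le_pow_left₀ (by positivity)
          (by nlinarith [mul_nonneg (mul_pos hδ hε).le (by linarith : 0 ≤ 2 - δ)]) _
    _ = δ ^ (m + n) * (ε - δ * ε / 4) ^ (m + n) := mul_pow _ _ _
    _ ≤ κ.real (Ici ε) * (ε - δ * ε / 4) ^ (m + n) := by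
        gcongr
        · exact pow_nonneg (by nlinarith) _
        · exact (pow_le_of_le_one hδ.le hδ_le_one hmn.ne').trans (min_le_left _ _)
end

section
/- For every p̄ ∈ (0,1], the Bernoulli measure κ_{p̄} := (1−p̄)δ₀ + p̄δ₁ on [0,∞) satisfies Wells' condition with a := min(p̄, 1/2): for every pair of integers m, n ∈ ℕ, ∫₀^∞ (r + a)^m (r − a)^n dκ_{p̄}(r) = (−1)^n (1−p̄) a^{m+n} + p̄ (1 + a)^m (1 − a)^n ≥ 0. -/
/-!
Statement 11: the Bernoulli measure `κ_{p̄} = (1-p̄)δ₀ + p̄δ₁` satisfies Wells' condition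
with `a = min(p̄, 1/2)` (Proposition 3.3, second part, of the paper).
-/

open MeasureTheory
open scoped ENNReal

/-- For every `p̄ ∈ (0,1]`, the Bernoulli measure
`κ_{p̄} := (1-p̄)δ₀ + p̄δ₁` satisfies, with `a := min(p̄, 1/2)`, for all `m, n ∈ ℕ`:
`∫₀^∞ (r+a)^m (r-a)^n dκ_{p̄}(r) = (-1)^n (1-p̄) a^{m+n} + p̄ (1+a)^m (1-a)^n ≥ 0`. -/
theorem wells_condition_bernoulli (p : ℝ) (hp0 : 0 < p) (hp1 : p ≤ 1) (m n : ℕ) :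
    (∫ t, (t + min p (1/2)) ^ m * (t - min p (1/2)) ^ n
        ∂(ENNReal.ofReal (1 - p) • Measure.dirac (0:ℝ) +
          ENNReal.ofReal p • Measure.dirac (1:ℝ))) =
      (-1) ^ n * (1 - p) * (min p (1/2)) ^ (m + n) +
        p * (1 + min p (1/2)) ^ m * (1 - min p (1/2)) ^ n ∧
    0 ≤ (-1) ^ n * (1 - p) * (min p (1/2)) ^ (m + n) +
        p * (1 + min p (1/2)) ^ m * (1 - min p (1/2)) ^ n := by
  set a := min p (1/2) with ha
  have ha0 : 0 < a := lt_min hp0 (by norm_num)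
  have hap : a ≤ p := min_le_left _ _
  have hah : a ≤ 1/2 := min_le_right _ _
  have ha1 : a ≤ 1 - a := by linarith
  have hf : Measurable fun t : ℝ => (t + a) ^ m * (t - a) ^ n := by
    measurability
  have hint : (∫ t, (t + a) ^ m * (t - a) ^ n
        ∂(ENNReal.ofReal (1 - p) • Measure.dirac (0:ℝ) +
          ENNReal.ofReal p • Measure.dirac (1:ℝ))) =
      (-1) ^ n * (1 - p) * a ^ (m + n) + p * (1 + a) ^ m * (1 - a) ^ n := by
    have h1 : Integrable (fun t : ℝ => (t + a) ^ m * (t - a) ^ n)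
        (ENNReal.ofReal (1 - p) • Measure.dirac (0:ℝ)) :=
      (((integrable_congr (ae_eq_dirac' hf)).mpr (integrable_const _))).smul_measure (by simp)
    have h2 : Integrable (fun t : ℝ => (t + a) ^ m * (t - a) ^ n)
        (ENNReal.ofReal p • Measure.dirac (1:ℝ)) :=
      (((integrable_congr (ae_eq_dirac' hf)).mpr (integrable_const _))).smul_measure (by simp)
    rw [integral_add_measure h1 h2, integral_smul_measure, integral_smul_measure,
      integral_dirac' _ _ hf.stronglyMeasurable, integral_dirac' _ _ hf.stronglyMeasurable,
      ENNReal.toReal_ofReal (by linarith), ENNReal.toReal_ofReal hp0.le]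
    simp only [zero_add, zero_sub, smul_eq_mul]
    rw [neg_pow, show (-1:ℝ)^n * a^n = a^n * (-1)^n by ring, pow_add]
    ring
  refine ⟨hint, ?_⟩
  rcases Nat.even_or_odd n with he | ho
  · have : ((-1:ℝ)) ^ n = 1 := he.neg_one_pow
    rw [this]
    have h1 : 0 ≤ (1 - p) * a ^ (m + n) := mul_nonneg (by linarith) (by positivity)
    have h2 : 0 ≤ p * (1 + a) ^ m * (1 - a) ^ n := by
      have : (0:ℝ) ≤ 1 - a := by linarith
      positivity
    linarith
  · have : ((-1:ℝ)) ^ n = -1 := ho.neg_one_pow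
    rw [this]
    obtain ⟨k, hk⟩ := ho
    have key : (1 - p) * a ^ (m + n) ≤ p * (1 + a) ^ m * (1 - a) ^ n := by
      have h1a : (0:ℝ) ≤ 1 - a := by linarith
      have e1 : a ^ m ≤ (1 + a) ^ m :=
        pow_le_pow_left₀ ha0.le (by linarith) m
      have e2 : a ^ (2*k) ≤ (1 - a) ^ (2*k) := pow_le_pow_left₀ ha0.le ha1 _
      have e3 : (1 - p) ≤ 1 - a := by linarith
      calc (1 - p) * a ^ (m + n)
          = (1 - p) * (a ^ m * a ^ (2*k) * a) := by
            rw [hk, pow_add, pow_add]; ring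
        _ ≤ (1 - a) * ((1 + a) ^ m * (1 - a) ^ (2*k) * p) := by
            apply mul_le_mul e3 _ _ (by linarith)
            · exact mul_le_mul (mul_le_mul e1 e2 (by positivity) (by positivity))
                hap ha0.le (by positivity)
            · positivity
        _ = p * (1 + a) ^ m * (1 - a) ^ n := by
            rw [hk, show 2*k+1 = (2*k)+1 from rfl, pow_succ]; ring
    nlinarith [key]
end

section
/- Fix β ∈ (0,∞), p̄ ∈ (0,1), and set p₀ := p̄/(p̄ + (1−p̄)·exp(−2dβ)). For every finite Λ ⊆ ℤ^d, the probability measure ν'_{Λ,β,p̄} on {0,1}^Λ is stochastically dominated by the i.i.d. Bernoulli(p₀) measure P_{Λ,p₀}: for every increasing function f : {0,1}^Λ → [0,∞), E_{ν'_{Λ,β,p̄}}[f] ≤ E_{P_{Λ,p₀}}[f]. In particular, for every x ∈ Λ and every r₁ ∈ {0,1}^{Λ∖{x}}, writing r₁^+ (resp. r₁^−) for the extension of r₁ to Λ with value 1 (resp. 0) at x, one has Z_{Λ,β,r₁^+} ≤ exp(2dβ)·Z_{Λ,β,r₁^−} and ν'_{Λ,β,p̄}(r_x = 1 | r = r₁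 on Λ∖{x}) ≤ p₀. -/
/-!
Adding a site to the environment switches on at most `2d` bonds, each raising the energy by
at most `β`, so `Z_{r'} ≤ e^{2dβ |D|} Z_r` whenever `r ≤ r'` differ only on `D`. Since the
odds `p₀/(1-p₀)` are `e^{2dβ}` times `p̄/(1-p̄)`, this is exactly Holley's lattice condition
`ν'(a) P_{p₀}(b) ≤ ν'(a ⊓ b) P_{p₀}(a ⊔ b)`, and Holley's inequality gives the domination.
For `a = r₁⁺`, `b = r₁⁻` the same condition is the bound on the conditional probability.
-/

open MeasureTheory Real
open scoped Classical ENNReal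

namespace XYAnnealed

/-- Vertices of the lattice `ℤ^d`. -/
abbrev Vert (d : ℕ) := Fin d → ℤ

/-- Nearest-neighbour adjacency in `ℤ^d`: `|x - y|₁ = 1`. -/
def adj {d : ℕ} (x y : Vert d) : Prop := (∑ i, (x i - y i).natAbs) = 1

/-- The product of Lebesgue measure restricted to `[0, 2π)` over the coordinates of `Λ`. -/
noncomputable def cubeMeasure {V : Type} (Λ : Finset V) : Measure (↥Λ → ℝ) :=
  Measure.pi fun _ => volume.restrict (Set.Ico 0 (2 * π))

/-- The (negated) Hamiltonian of the quenched XY model on `Λ` in the site environment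
`r : ↥Λ → Bool`: `β Σ_{x,y ∈ Λ, x∼y} r_x r_y cos(θ_x - θ_y)`, each unordered pair being
counted once (whence the factor `β/2` in front of the ordered double sum). -/
noncomputable def energy {d : ℕ} (Λ : Finset (Vert d)) (β : ℝ) (r : ↥Λ → Bool)
    (θ : ↥Λ → ℝ) : ℝ :=
  (β / 2) * ∑ x : ↥Λ, ∑ y : ↥Λ,
    if adj x.1 y.1 ∧ r x = true ∧ r y = true then Real.cos (θ x - θ y) else 0

/-- The pairing `m·θ := Σ_{x ∈ Λ} m_x θ_x`. -/
noncomputable def mDot {d : ℕ} (Λ : Finset (Vert d)) (m : ↥Λ → ℤ) (θ : ↥Λ → ℝ) : ℝ :=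
  ∑ x : ↥Λ, (m x : ℝ) * θ x

/-- The partition function `Z_{Λ,β,r}` of the quenched XY model. -/
noncomputable def Z {d : ℕ} (Λ : Finset (Vert d)) (β : ℝ) (r : ↥Λ → Bool) : ℝ :=
  ∫ θ, Real.exp (energy Λ β r θ) ∂cubeMeasure Λ

/-- The unnormalized correlation `∫ cos(mθ) e^{-H_{Λ,β,r}}`. -/
noncomputable def I {d : ℕ} (Λ : Finset (Vert d)) (β : ℝ) (r : ↥Λ → Bool)
    (m : ↥Λ → ℤ) : ℝ :=
  ∫ θ, Real.cos (mDot Λ m θ) * Real.exp (energy Λ β r θ) ∂cubeMeasure Λ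

/-- The quenched expectation `⟨cos(mθ)⟩_{μ_{Λ,β,r}}`. -/
noncomputable def qExp {d : ℕ} (Λ : Finset (Vert d)) (β : ℝ) (r : ↥Λ → Bool)
    (m : ↥Λ → ℤ) : ℝ :=
  I Λ β r m / Z Λ β r

/-- The Bernoulli(p) weight of a site configuration on `Λ`:
`P_{Λ,p}({r}) = ∏_{x ∈ Λ} p^{r_x} (1-p)^{1-r_x}`. -/
noncomputable def w {d : ℕ} (Λ : Finset (Vert d)) (p : ℝ) (r : ↥Λ → Bool) : ℝ :=
  ∏ x : ↥Λ, if r x then p else 1 - p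

/-- The annealed expectation `⟨cos(mθ)⟩_{μ_{Λ,β,κ(pb)}}` for the XY model with annealed
Bernoulli(pb) site disorder. -/
noncomputable def annExp {d : ℕ} (Λ : Finset (Vert d)) (β : ℝ) (p : ℝ)
    (m : ↥Λ → ℤ) : ℝ :=
  (∑ r : ↥Λ → Bool, w Λ p r * I Λ β r m) / (∑ r : ↥Λ → Bool, w Λ p r * Z Λ β r)

/-- The probability mass function of the measure `ν'_{Λ,β,pb}` on `{0,1}^Λ`,
`ν'({r}) = P_{Λ,pb}({r}) Z_{Λ,β,r} / Σ_{r'} P_{Λ,pb}({r'}) Z_{Λ,β,r'}`. -/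
noncomputable def nu' {d : ℕ} (Λ : Finset (Vert d)) (β : ℝ) (pb : ℝ)
    (r : ↥Λ → Bool) : ℝ :=
  w Λ pb r * Z Λ β r / ∑ r' : ↥Λ → Bool, w Λ pb r' * Z Λ β r'

open scoped Finset

variable {d : ℕ}

lemma adj_comm {x y : Vert d} : adj x y ↔ adj y x := by
  simp only [adj, ← Int.natAbs_neg (y _ - x _), neg_sub]

lemma exists_eq_update_of_adj {x y : Vert d} (h : adj x y) :
    ∃ i : Fin d, ∃ s : Bool, y = Function.update x i (x i + if s then 1 else -1) := by
  obtain ⟨i, -, hi⟩ : ∃ i ∈ Finset.univ, (x i - y i).natAbs ≠ 0 :=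
    Finset.exists_ne_zero_of_sum_ne_zero (by rw [h]; exact one_ne_zero)
  have hsplit := Finset.add_sum_erase Finset.univ (fun j => (x j - y j).natAbs) (Finset.mem_univ i)
  rw [adj] at h
  have hrest : ∀ j ∈ Finset.univ.erase i, (x j - y j).natAbs = 0 :=
    Finset.sum_eq_zero_iff.mp (by omega)
  refine ⟨i, decide (y i = x i + 1), funext fun j => ?_⟩
  rcases eq_or_ne j i with rfl | hj
  · have : (x j - y j).natAbs = 1 := by omega
    by_cases hy : y j = x j + 1
    · simp [hy]
    · simpa [hy, ← sub_eq_add_neg] using (by omega : y j = x j - 1)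
  · have := hrest j (Finset.mem_erase.mpr ⟨hj, Finset.mem_univ j⟩)
    rw [Function.update_of_ne hj]
    omega

lemma card_adj_le (Λ : Finset (Vert d)) (x : Vert d) :
    #{y : ↥Λ | adj x y} ≤ 2 * d := by
  let nbr : Fin d × Bool → Vert d := fun is =>
    Function.update x is.1 (x is.1 + if is.2 then 1 else -1)
  calc #{y : ↥Λ | adj x y}
      ≤ #(Finset.univ.image nbr) := by
        refine Finset.card_le_card_of_injOn Subtype.val (fun y hy => ?_)
          Subtype.val_injective.injOn
        obtain ⟨i, s, hys⟩ := exists_eq_update_of_adj (Finset.mem_filter.mp hy).2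
        exact Finset.mem_image.mpr ⟨(i, s), Finset.mem_univ _, hys.symm⟩
    _ ≤ Fintype.card (Fin d × Bool) := Finset.card_image_le
    _ = 2 * d := by simp [mul_comm]

variable {Λ : Finset (Vert d)}

lemma sum_sum_adj_mem_le (D : Finset ↥Λ) :
    ∑ x : ↥Λ, ∑ y : ↥Λ, (if adj x.1 y.1 ∧ x ∈ D then (1:ℝ) else 0) ≤ 2 * d * #D := by
  calc ∑ x : ↥Λ, ∑ y : ↥Λ, (if adj x.1 y.1 ∧ x ∈ D then (1:ℝ) else 0)
      = ∑ x ∈ D, (#{y : ↥Λ | adj x.1 y.1} : ℝ) := by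
        simp only [and_comm (b := _ ∈ D), ite_and, Finset.sum_ite_irrel, Finset.sum_const_zero,
          Finset.sum_ite_mem, Finset.univ_inter, Finset.sum_boole]
    _ ≤ ∑ _x ∈ D, (2 * d : ℝ) :=
        Finset.sum_le_sum fun x _ => by exact_mod_cast card_adj_le Λ x.1
    _ = 2 * d * #D := by rw [Finset.sum_const, nsmul_eq_mul, mul_comm]

lemma bond_sub_le {r r' : ↥Λ → Bool} (hle : r ≤ r') {D : Finset ↥Λ}
    (hD : ∀ x, r x ≠ r' x → x ∈ D) (x y : ↥Λ) {t : ℝ} (ht : t ≤ 1) :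
    (if adj x.1 y.1 ∧ r' x = true ∧ r' y = true then t else 0) -
        (if adj x.1 y.1 ∧ r x = true ∧ r y = true then t else 0) ≤
      (if adj x.1 y.1 ∧ x ∈ D then 1 else 0) + (if adj y.1 x.1 ∧ y ∈ D then 1 else 0) := by
  have hmono : ∀ z, r z = true → r' z = true := fun z => Bool.le_iff_imp.mp (hle z)
  by_cases hr : adj x.1 y.1 ∧ r x = true ∧ r y = true
  · rw [if_pos hr, if_pos ⟨hr.1, hmono x hr.2.1, hmono y hr.2.2⟩, sub_self]
    positivity
  rw [if_neg hr, sub_zero]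
  by_cases hr' : adj x.1 y.1 ∧ r' x = true ∧ r' y = true
  · have hcase : (adj x.1 y.1 ∧ x ∈ D) ∨ (adj y.1 x.1 ∧ y ∈ D) := by
      by_cases hx : r x = true
      · exact .inr ⟨adj_comm.mp hr'.1, hD y fun h => hr ⟨hr'.1, hx, by rw [h, hr'.2.2]⟩⟩
      · exact .inl ⟨hr'.1, hD x fun h => hx (h.trans hr'.2.1)⟩
    rw [if_pos hr']
    refine ht.trans ?_
    rcases hcase with h | h
    · rw [if_pos h]; exact le_add_of_nonneg_right (by positivity)
    · rw [if_pos h]; exact le_add_of_nonneg_left (by positivity)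
  · rw [if_neg hr']
    positivity

variable {β : ℝ}

lemma energy_le_of_le (hβ : 0 ≤ β) {r r' : ↥Λ → Bool} (hle : r ≤ r') {D : Finset ↥Λ}
    (hD : ∀ x, r x ≠ r' x → x ∈ D) (θ : ↥Λ → ℝ) :
    energy Λ β r' θ ≤ energy Λ β r θ + 2 * d * β * #D := by
  have hcount : ∑ x : ↥Λ, ∑ y : ↥Λ, ((if adj x.1 y.1 ∧ x ∈ D then (1:ℝ) else 0) +
      (if adj y.1 x.1 ∧ y ∈ D then 1 else 0)) ≤ 2 * d * #D + 2 * d * #D := by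
    simp only [Finset.sum_add_distrib]
    refine add_le_add (sum_sum_adj_mem_le D) ?_
    rw [Finset.sum_comm]
    exact sum_sum_adj_mem_le D
  rw [← sub_le_iff_le_add', energy, energy, ← mul_sub, ← Finset.sum_sub_distrib]
  simp_rw [← Finset.sum_sub_distrib]
  calc β / 2 * _ ≤ β / 2 * (2 * d * #D + 2 * d * #D) := by
        gcongr
        refine le_trans (Finset.sum_le_sum fun x _ => Finset.sum_le_sum fun y _ => ?_) hcount
        exact bond_sub_le hle hD x y (Real.cos_le_one _)
    _ = 2 * d * β * #D := by ring

instance : IsFiniteMeasure (cubeMeasure Λ) := by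
  unfold cubeMeasure; infer_instance

instance : NeZero (cubeMeasure Λ) :=
  ⟨by simp [← Measure.measure_univ_ne_zero, cubeMeasure, Measure.pi_univ, Real.volume_Ico,
    Real.pi_pos]⟩

lemma continuous_energy (r : ↥Λ → Bool) : Continuous (energy Λ β r) := by
  refine continuous_const.mul
    (continuous_finsetSum _ fun x _ => continuous_finsetSum _ fun y _ => ?_)
  split_ifs <;> fun_prop

lemma abs_energy_le (r : ↥Λ → Bool) (θ : ↥Λ → ℝ) :
    |energy Λ β r θ| ≤ |β| / 2 * Fintype.card ↥Λ ^ 2 := by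
  rw [energy, abs_mul, abs_div, abs_two]
  gcongr
  calc _ ≤ ∑ _x : ↥Λ, ∑ _y : ↥Λ, (1:ℝ) := by
        refine (Finset.abs_sum_le_sum_abs _ _).trans (Finset.sum_le_sum fun x _ => ?_)
        refine (Finset.abs_sum_le_sum_abs _ _).trans (Finset.sum_le_sum fun y _ => ?_)
        split_ifs
        · exact Real.abs_cos_le_one _
        · simp
    _ = Fintype.card ↥Λ ^ 2 := by simp [sq]

lemma integrable_exp_energy (r : ↥Λ → Bool) :
    Integrable (fun θ => Real.exp (energy Λ β r θ)) (cubeMeasure Λ) := by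
  refine .of_bound (continuous_energy r).rexp.aestronglyMeasurable
    (Real.exp (|β| / 2 * Fintype.card ↥Λ ^ 2)) (ae_of_all _ fun θ => ?_)
  rw [Real.norm_of_nonneg (Real.exp_pos _).le]
  exact Real.exp_le_exp.mpr ((le_abs_self _).trans (abs_energy_le r θ))

lemma Z_pos (r : ↥Λ → Bool) : 0 < Z Λ β r :=
  integral_exp_pos (integrable_exp_energy r)

lemma Z_le_of_le (hβ : 0 ≤ β) {r r' : ↥Λ → Bool} (hle : r ≤ r') {D : Finset ↥Λ}
    (hD : ∀ x, r x ≠ r' x → x ∈ D) :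
    Z Λ β r' ≤ Real.exp (2 * d * β) ^ #D * Z Λ β r := by
  rw [Z, Z, ← integral_const_mul]
  refine integral_mono (integrable_exp_energy r') ((integrable_exp_energy r).const_mul _)
    fun θ => ?_
  rw [← Real.exp_nat_mul, ← Real.exp_add]
  exact Real.exp_le_exp.mpr (by linarith [energy_le_of_le hβ hle hD θ])

lemma Z_update_true_le (hβ : 0 ≤ β) (x : ↥Λ) (r : ↥Λ → Bool) :
    Z Λ β (Function.update r x true) ≤
      Real.exp (2 * d * β) * Z Λ β (Function.update r x false) := by
  have hle : Function.update r x false ≤ Function.update r x true :=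
    update_le_update_iff'.mpr (Bool.false_le _)
  have hD : ∀ i, Function.update r x false i ≠ Function.update r x true i →
      i ∈ ({x} : Finset ↥Λ) := fun i hi =>
    Finset.mem_singleton.mpr (by by_contra hix; simp [hix] at hi)
  simpa using Z_le_of_le hβ hle hD

lemma w_nonneg {p : ℝ} (hp0 : 0 ≤ p) (hp1 : p ≤ 1) (r : ↥Λ → Bool) : 0 ≤ w Λ p r :=
  Finset.prod_nonneg fun i _ => by split_ifs <;> linarith

lemma w_pos {p : ℝ} (hp0 : 0 < p) (hp1 : p < 1) (r : ↥Λ → Bool) : 0 < w Λ p r :=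
  Finset.prod_pos fun i _ => by split_ifs <;> linarith

lemma sum_w_eq_one (p : ℝ) : ∑ r : ↥Λ → Bool, w Λ p r = 1 := by
  simp only [w]
  rw [← Fintype.prod_sum (fun _ (j : Bool) => if j then p else 1 - p)]
  simp

lemma w_update_false_mul (p : ℝ) (x : ↥Λ) (r : ↥Λ → Bool) :
    w Λ p (Function.update r x false) * p = w Λ p (Function.update r x true) * (1 - p) := by
  have hrest : ∀ s, ∏ i ∈ Finset.univ.erase x, (if Function.update r x s i then p else 1 - p) =
      ∏ i ∈ Finset.univ.erase x, (if r i then p else 1 - p) := fun s =>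
    Finset.prod_congr rfl fun i hi => by rw [Function.update_of_ne (Finset.ne_of_mem_erase hi)]
  simp only [w, ← Finset.mul_prod_erase Finset.univ _ (Finset.mem_univ x), Function.update_self,
    hrest, Bool.false_eq_true, if_false, if_true]
  ring

lemma w_inf_mul_w_sup {p q c : ℝ} (hc : (1 - p) * q = p * (1 - q) * c) (a b : ↥Λ → Bool) :
    w Λ p (a ⊓ b) * w Λ q (a ⊔ b) =
      w Λ p a * w Λ q b * c ^ #{i | a i = true ∧ b i = false} := by
  have hsite : ∀ u v : Bool, (if u ⊓ v then p else 1 - p) * (if u ⊔ v then q else 1 - q) =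
      (if u then p else 1 - p) * (if v then q else 1 - q) *
        (if u = true ∧ v = false then c else 1) := by
    intro u v; cases u <;> cases v <;> simp [hc]
  simp only [w, ← Finset.prod_const, Finset.prod_filter, ← Finset.prod_mul_distrib]
  exact Finset.prod_congr rfl fun i _ => hsite (a i) (b i)

variable {pb : ℝ}

lemma nu'_nonneg (hp0 : 0 ≤ pb) (hp1 : pb ≤ 1) (r : ↥Λ → Bool) : 0 ≤ nu' Λ β pb r :=
  div_nonneg (mul_nonneg (w_nonneg hp0 hp1 r) (Z_pos r).le)
    (Finset.sum_nonneg fun r' _ => mul_nonneg (w_nonneg hp0 hp1 r') (Z_pos r').le)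

lemma sum_nu'_eq_one (hp0 : 0 < pb) (hp1 : pb < 1) : ∑ r : ↥Λ → Bool, nu' Λ β pb r = 1 := by
  simp only [nu']
  rw [← Finset.sum_div, div_self]
  exact (Finset.sum_pos (fun r _ => mul_pos (w_pos hp0 hp1 r) (Z_pos r)) Finset.univ_nonempty).ne'

lemma nu'_mul_w_le_inf_sup (hβ : 0 ≤ β) (hp0 : 0 ≤ pb) (hp1 : pb ≤ 1) {q : ℝ} (hq0 : 0 ≤ q)
    (hq1 : q ≤ 1) (hodds : (1 - pb) * q = pb * (1 - q) * Real.exp (2 * d * β))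
    (a b : ↥Λ → Bool) :
    nu' Λ β pb a * w Λ q b ≤ nu' Λ β pb (a ⊓ b) * w Λ q (a ⊔ b) := by
  have hZ : Z Λ β a ≤
      Real.exp (2 * d * β) ^ #{i | a i = true ∧ b i = false} * Z Λ β (a ⊓ b) :=
    Z_le_of_le hβ inf_le_left fun i hi => by
      cases ha : a i <;> cases hb : b i <;> simp_all
  have hw := w_nonneg hp0 hp1 a
  have hw' := w_nonneg hq0 hq1 b
  have hS : 0 ≤ ∑ r : ↥Λ → Bool, w Λ pb r * Z Λ β r :=
    Finset.sum_nonneg fun r _ => mul_nonneg (w_nonneg hp0 hp1 r) (Z_pos r).le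
  simp only [nu', div_mul_eq_mul_div]
  gcongr ?_ / _
  calc w Λ pb a * Z Λ β a * w Λ q b
      ≤ w Λ pb a * (Real.exp (2 * d * β) ^ #{i | a i = true ∧ b i = false} * Z Λ β (a ⊓ b)) *
          w Λ q b := by gcongr
    _ = w Λ pb (a ⊓ b) * Z Λ β (a ⊓ b) * w Λ q (a ⊔ b) := by
        rw [mul_right_comm (w Λ pb (a ⊓ b)), w_inf_mul_w_sup hodds]; ring

lemma update_true_div_le_of_mul_le_inf_sup {μ : (↥Λ → Bool) → ℝ} (hμ : ∀ r, 0 ≤ μ r) {q : ℝ}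
    (hq0 : 0 < q) (hq1 : q < 1) (h : ∀ a b, μ a * w Λ q b ≤ μ (a ⊓ b) * w Λ q (a ⊔ b))
    (x : ↥Λ) (r : ↥Λ → Bool) :
    μ (Function.update r x true) /
        (μ (Function.update r x true) + μ (Function.update r x false)) ≤ q := by
  set rt := Function.update r x true
  set rf := Function.update r x false
  have hle : rf ≤ rt := update_le_update_iff'.mpr (Bool.false_le _)
  have hlattice : μ rt * w Λ q rf ≤ μ rf * w Λ q rt := by
    simpa [inf_eq_right.mpr hle, sup_eq_left.mpr hle] using h rt rf
  have key : μ rt * (1 - q) ≤ μ rf * q := by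
    refine le_of_mul_le_mul_right ?_ (w_pos hq0 hq1 rt)
    calc μ rt * (1 - q) * w Λ q rt = μ rt * w Λ q rf * q := by
          rw [mul_assoc, mul_assoc, w_update_false_mul]; ring
      _ ≤ μ rf * w Λ q rt * q := mul_le_mul_of_nonneg_right hlattice hq0.le
      _ = μ rf * q * w Λ q rt := by ring
  exact div_le_of_le_mul₀ (add_nonneg (hμ rt) (hμ rf)) hq0.le (by linarith)

/-- Fix `β ∈ (0,∞)`, `pb ∈ (0,1)` and set
`p₀ := pb/(pb + (1-pb) e^{-2dβ})`.  Then `ν'_{Λ,β,pb}` is stochastically dominated by the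
i.i.d. Bernoulli(p₀) measure: `E_{ν'}[f] ≤ E_{P_{Λ,p₀}}[f]` for every nonnegative
increasing `f`.  In particular, for every `x ∈ Λ` and `r₁ ∈ {0,1}^{Λ∖{x}}`, writing
`r₁⁺` (resp. `r₁⁻`) for the extension of `r₁` with value `1` (resp. `0`) at `x`,
`Z_{Λ,β,r₁⁺} ≤ e^{2dβ} Z_{Λ,β,r₁⁻}` and the conditional probability
`ν'(r_x = 1 | r = r₁ on Λ∖{x}) = ν'(r₁⁺)/(ν'(r₁⁺) + ν'(r₁⁻))` is at most `p₀`. -/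
theorem nu'_dominated (d : ℕ) (β : ℝ) (hβ : 0 < β)
    (pb : ℝ) (hp0 : 0 < pb) (hp1 : pb < 1) (Λ : Finset (Vert d)) :
    (∀ f : (↥Λ → Bool) → ℝ, (∀ r, 0 ≤ f r) →
      (∀ r r' : ↥Λ → Bool, (∀ x, r x ≤ r' x) → f r ≤ f r') →
      ∑ r : ↥Λ → Bool, nu' Λ β pb r * f r ≤
        ∑ r : ↥Λ → Bool,
          w Λ (pb / (pb + (1 - pb) * Real.exp (-(2 * (d:ℝ)) * β))) r * f r) ∧
    (∀ (x : ↥Λ) (r₁ : ↥Λ → Bool),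
      Z Λ β (Function.update r₁ x true) ≤
        Real.exp (2 * (d:ℝ) * β) * Z Λ β (Function.update r₁ x false) ∧
      nu' Λ β pb (Function.update r₁ x true) /
          (nu' Λ β pb (Function.update r₁ x true) + nu' Λ β pb (Function.update r₁ x false)) ≤
        pb / (pb + (1 - pb) * Real.exp (-(2 * (d:ℝ)) * β))) := by
  set E := Real.exp (-(2 * (d:ℝ)) * β) with hE
  set q := pb / (pb + (1 - pb) * E) with hq
  have hE0 : 0 < E := Real.exp_pos _
  have hE1 : 0 < (1 - pb) * E := mul_pos (sub_pos.mpr hp1) hE0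
  have hden : 0 < pb + (1 - pb) * E := by linarith
  have hq0 : 0 < q := div_pos hp0 hden
  have hq1 : q < 1 := (div_lt_one hden).mpr (by linarith)
  have hodds : (1 - pb) * q = pb * (1 - q) * Real.exp (2 * d * β) := by
    rw [show Real.exp (2 * d * β) = E⁻¹ by rw [hE, ← Real.exp_neg]; ring_nf, hq]
    field_simp
    ring
  have hlattice := nu'_mul_w_le_inf_sup (Λ := Λ) hβ.le hp0.le hp1.le hq0.le hq1.le hodds
  refine ⟨fun f hf0 hf => ?_, fun x r₁ => ⟨Z_update_true_le hβ.le x r₁,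
    update_true_div_le_of_mul_le_inf_sup (nu'_nonneg hp0.le hp1.le) hq0 hq1 hlattice x r₁⟩⟩
  have hmass : ∑ r, nu' Λ β pb r = ∑ r, w Λ q r := by rw [sum_nu'_eq_one hp0 hp1, sum_w_eq_one]
  simpa only [mul_comm (f _)] using holley _ _ f hf0 (nu'_nonneg hp0.le hp1.le)
    (w_nonneg hq0.le hq1.le) hf hmass hlattice

end XYAnnealed
end

section
/- Chain connectivity of Voronoi cells under a density assumption: let d ≥ 1, R > 0, and let P ⊆ ℝ^d be a nonempty locally finite set (P ∩ K is finite for every bounded K ⊆ ℝ^d) such that every point of Λ_{5R} := [−5R,5R]^d lies within Euclidean distance R/10 of some point of P. Then for every pair of distinct points x, y ∈ P ∩ Λ_{3R}, there exist an integer M with 1 ≤ M ≤ #(P ∩ Λ_{4R}) and distinct points x = x₀, x₁, …, x_M = y, all belonging to P ∩ Λ_{4R}, such that Vor(x_i, P) ∩ Vor(x_{i+1}, P) ≠ ∅ for every 0 ≤ i ≤ M−1. -/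
/-!
Join `x` and `y` by the segment `[x, y] ⊆ Λ_{3R}`. By the density assumption each point `z` of
`Λ_{3R}` has a point of `P` within `R/10`, so the point of `P` nearest to `z` exists (local
finiteness), lies in `Λ_{4R}`, and has `z` in its Voronoi cell. Thus the segment is covered by
the finitely many closed cells of `F := P ∩ Λ_{4R}`, and since a segment is connected, the graph
on `F` joining two points whose cells meet connects `x` to `y`. A path in this graph is the
required chain; being a path, it has at most `#F` edges.
-/

open Metric

namespace Voronoi

/-- Points of `ℝ^d` with the Euclidean metric. -/
abbrev Pt (d : ℕ) := EuclideanSpace ℝ (Fin d)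

/-- The Voronoi cell of `x` with respect to the set `P`:
`Vor(x,P) = {z : |z - x| ≤ |z - y| for all y ∈ P}`. -/
def vor {d : ℕ} (P : Set (Pt d)) (x : Pt d) : Set (Pt d) :=
  {z | ∀ y ∈ P, dist z x ≤ dist z y}

/-- The cube `Λ_s = [-s,s]^d`. -/
def cube (d : ℕ) (s : ℝ) : Set (Pt d) := {z | ∀ i, |z i| ≤ s}

end Voronoi

theorem SimpleGraph.Reachable.exists_injective_chain {V : Type*} [Finite V] {G : SimpleGraph V}
    {u v : V} (h : G.Reachable u v) (huv : u ≠ v) :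
    ∃ M : ℕ, 1 ≤ M ∧ M < Nat.card V ∧ ∃ c : Fin (M + 1) → V, Function.Injective c ∧
      c 0 = u ∧ c (Fin.last M) = v ∧ ∀ i : Fin M, G.Adj (c i.castSucc) (c i.succ) := by
  classical
  have := Fintype.ofFinite V
  obtain ⟨w⟩ := h
  have hpath := w.bypass_isPath
  refine ⟨w.bypass.length, ?_, ?_, fun i => w.bypass.getVert i, ?_, w.bypass.getVert_zero,
    w.bypass.getVert_length, fun i => w.bypass.adj_getVert_succ i.isLt⟩
  · exact Nat.pos_of_ne_zero fun h0 => huv (SimpleGraph.Walk.eq_of_length_eq_zero h0)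
  · exact Nat.card_eq_fintype_card (α := V) ▸ hpath.length_lt
  · intro i j hij
    exact Fin.ext (hpath.getVert_injOn (Nat.lt_succ_iff.1 i.isLt) (Nat.lt_succ_iff.1 j.isLt) hij)

theorem IsPreconnected.reachable_of_isClosed_cover {X ι : Type*} [TopologicalSpace X] [Finite ι]
    {f : ι → Set X} {S : Set X} (hS : IsPreconnected S) (hf : ∀ i, IsClosed (f i))
    (hcover : S ⊆ ⋃ i, f i) {i j : ι} (hi : (S ∩ f i).Nonempty) (hj : (S ∩ f j).Nonempty) :
    (SimpleGraph.fromRel fun k l => (f k ∩ f l).Nonempty).Reachable i j := by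
  set G := SimpleGraph.fromRel fun k l => (f k ∩ f l).Nonempty
  by_contra hij
  have hclosed : ∀ T : Set ι, IsClosed (⋃ k ∈ T, f k) := fun T =>
    (Set.toFinite T).isClosed_biUnion fun k _ => hf k
  have hsplit : S ⊆ (⋃ k ∈ {k | G.Reachable i k}, f k) ∪ ⋃ k ∈ {k | ¬G.Reachable i k}, f k := by
    intro z hz
    obtain ⟨k, hzk⟩ := Set.mem_iUnion.1 (hcover hz)
    by_cases hk : G.Reachable i k
    · exact Or.inl (Set.mem_biUnion hk hzk)
    · exact Or.inr (Set.mem_biUnion hk hzk)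
  -- `S` meets both closed parts, so some point lies in a cell on each side: an edge out of the
  -- component of `i`.
  obtain ⟨z, -, hzA, hzB⟩ := isPreconnected_closed_iff.1 hS _ _ (hclosed _) (hclosed _) hsplit
    (hi.mono fun z hz => ⟨hz.1, Set.mem_biUnion (SimpleGraph.Reachable.refl i) hz.2⟩)
    (hj.mono fun z hz => ⟨hz.1, Set.mem_biUnion hij hz.2⟩)
  obtain ⟨k, hk, hzk⟩ := Set.mem_iUnion₂.1 hzA
  obtain ⟨l, hl, hzl⟩ := Set.mem_iUnion₂.1 hzB
  rcases eq_or_ne k l with rfl | hkl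
  · exact hl hk
  · exact hl (hk.trans (SimpleGraph.fromRel_adj _ k l |>.2 ⟨hkl, Or.inl ⟨z, hzk, hzl⟩⟩).reachable)

namespace Voronoi

theorem cube_mono {d : ℕ} {s t : ℝ} (hst : s ≤ t) : cube d s ⊆ cube d t :=
  fun _ hz i => (hz i).trans hst

theorem isBounded_cube (d : ℕ) (s : ℝ) : Bornology.IsBounded (cube d s) := by
  rw [Bornology.isBounded_induced]
  exact (isBounded_Icc (fun _ => -s) fun _ => s).subset <| by
    rintro _ ⟨z, hz, rfl⟩
    exact ⟨fun i => (abs_le.1 (hz i)).1, fun i => (abs_le.1 (hz i)).2⟩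

theorem convex_cube (d : ℕ) (s : ℝ) : Convex ℝ (cube d s) := by
  intro x hx y hy a b ha hb hab i
  calc |a * x i + b * y i| ≤ a * |x i| + b * |y i| := by
        simpa [abs_of_nonneg ha, abs_of_nonneg hb] using abs_add_le (a * x i) (b * y i)
    _ ≤ a * s + b * s := by gcongr <;> [exact hx i; exact hy i]
    _ = s := by rw [← add_mul, hab, one_mul]

theorem mem_cube_of_dist_le {d : ℕ} {s r : ℝ} {z p : Pt d} (hz : z ∈ cube d s)
    (hpz : dist p z ≤ r) : p ∈ cube d (s + r) := fun i => by
  have hcoord : |p i - z i| ≤ r := (PiLp.dist_apply_le p z i).trans hpz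
  linarith [abs_sub_abs_le_abs_sub (p i) (z i), hz i]

theorem self_mem_vor {d : ℕ} (P : Set (Pt d)) (p : Pt d) : p ∈ vor P p := fun q _ => by
  rw [dist_self]
  exact dist_nonneg

theorem isClosed_vor {d : ℕ} (P : Set (Pt d)) (p : Pt d) : IsClosed (vor P p) := by
  simp only [vor, Set.ofPred_forall]
  exact isClosed_biInter fun q _ => isClosed_le (continuous_id.dist continuous_const)
    (continuous_id.dist continuous_const)

theorem exists_mem_vor_of_dist_le {d : ℕ} {P : Set (Pt d)} {z p₀ : Pt d} {r : ℝ}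
    (hfin : (P ∩ closedBall z r).Finite) (hp₀ : p₀ ∈ P) (hzp₀ : dist z p₀ ≤ r) :
    ∃ p ∈ P, dist z p ≤ r ∧ z ∈ vor P p := by
  obtain ⟨p, ⟨hp, hpr⟩, hmin⟩ :=
    Set.exists_min_image _ (dist z) hfin ⟨p₀, hp₀, mem_closedBall'.2 hzp₀⟩
  refine ⟨p, hp, mem_closedBall'.1 hpr, fun q hq => ?_⟩
  by_cases hqr : dist z q ≤ r
  · exact hmin q ⟨hq, mem_closedBall'.2 hqr⟩
  · linarith [mem_closedBall'.1 hpr]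

theorem voronoi_chain_general (d : ℕ) (R : ℝ) (hR : 0 < R)
    (P : Set (Pt d))
    (hlf : ∀ K : Set (Pt d), Bornology.IsBounded K → (P ∩ K).Finite)
    (hdense : ∀ z ∈ cube d (5 * R), ∃ p ∈ P, dist z p ≤ R / 10)
    (x y : Pt d) (hx : x ∈ P ∩ cube d (3 * R)) (hy : y ∈ P ∩ cube d (3 * R))
    (hxy : x ≠ y) :
    ∃ M : ℕ, 1 ≤ M ∧ M ≤ (P ∩ cube d (4 * R)).ncard ∧
      ∃ c : Fin (M + 1) → Pt d, Function.Injective c ∧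
        c 0 = x ∧ c (Fin.last M) = y ∧
        (∀ i, c i ∈ P ∩ cube d (4 * R)) ∧
        (∀ i : Fin M, (vor P (c i.castSucc) ∩ vor P (c i.succ)).Nonempty) := by
  set F := P ∩ cube d (4 * R)
  have : Finite F := (hlf _ (isBounded_cube d (4 * R))).to_subtype
  have hcover : segment ℝ x y ⊆ ⋃ p : F, vor P p := by
    intro z hz
    have hz3 := (convex_cube d (3 * R)).segment_subset hx.2 hy.2 hz
    obtain ⟨p₀, hp₀, hzp₀⟩ := hdense z (cube_mono (by linarith) hz3)
    obtain ⟨p, hp, hzp, hzv⟩ := exists_mem_vor_of_dist_le (hlf _ isBounded_closedBall) hp₀ hzp₀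
    have hp4 := cube_mono (t := 4 * R) (by linarith) (mem_cube_of_dist_le hz3 (dist_comm z p ▸ hzp))
    exact Set.mem_iUnion.2 ⟨⟨p, hp, hp4⟩, hzv⟩
  have hxF : x ∈ F := ⟨hx.1, cube_mono (by linarith) hx.2⟩
  have hyF : y ∈ F := ⟨hy.1, cube_mono (by linarith) hy.2⟩
  have hreach := (convex_segment x y).isPreconnected.reachable_of_isClosed_cover
    (f := fun p : F => vor P p) (i := ⟨x, hxF⟩) (j := ⟨y, hyF⟩) (fun p => isClosed_vor P p)
    hcover ⟨x, left_mem_segment ℝ x y, self_mem_vor P x⟩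
    ⟨y, right_mem_segment ℝ x y, self_mem_vor P y⟩
  obtain ⟨M, hM, hMF, c, hc, hc0, hcM, hadj⟩ :=
    hreach.exists_injective_chain (Subtype.coe_ne_coe.1 hxy)
  refine ⟨M, hM, hMF.le, fun i => c i,
    Subtype.val_injective.comp hc, congrArg Subtype.val hc0, congrArg Subtype.val hcM, fun i => (c i).2, fun i => ?_⟩
  obtain ⟨-, hmeet | hmeet⟩ := (SimpleGraph.fromRel_adj _ _ _).1 (hadj i)
  · exact hmeet
  · exact Set.inter_comm _ _ ▸ hmeet

/-- Let `d ≥ 1`, `R > 0` and let `P ⊆ ℝ^d` be a nonempty locally finite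
set such that every point of `Λ_{5R}` lies within distance `R/10` of `P`.  Then any two
distinct points `x, y ∈ P ∩ Λ_{3R}` are joined by a chain `x = x₀, x₁, …, x_M = y` of
distinct points of `P ∩ Λ_{4R}`, with `1 ≤ M ≤ #(P ∩ Λ_{4R})`, whose consecutive Voronoi
cells intersect. -/
theorem voronoi_chain (d : ℕ) (hd : 1 ≤ d) (R : ℝ) (hR : 0 < R)
    (P : Set (Pt d)) (hP : P.Nonempty)
    (hlf : ∀ K : Set (Pt d), Bornology.IsBounded K → (P ∩ K).Finite)
    (hdense : ∀ z ∈ cube d (5 * R), ∃ p ∈ P, dist z p ≤ R / 10)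
    (x y : Pt d) (hx : x ∈ P ∩ cube d (3 * R)) (hy : y ∈ P ∩ cube d (3 * R))
    (hxy : x ≠ y) :
    ∃ M : ℕ, 1 ≤ M ∧ M ≤ (P ∩ cube d (4 * R)).ncard ∧
      ∃ c : Fin (M + 1) → Pt d, Function.Injective c ∧
        c 0 = x ∧ c (Fin.last M) = y ∧
        (∀ i, c i ∈ P ∩ cube d (4 * R)) ∧
        (∀ i : Fin M, (vor P (c i.castSucc) ∩ vor P (c i.succ)).Nonempty) :=
  voronoi_chain_general d R hR P hlf hdense x y hx hy hxy

end Voronoi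
end
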